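/- Let D be the improved digraph whose associated undirected graph F is a forest, let T be a negative tree of D, and assume c is nearly conservative on D. If P is a minimum-weight directed path from s to t that uses some vertex of V(T), and u is the first vertex of P belonging to V(T) while v is the last vertex of P belonging to V(T), then the subpath P[u,v] of P from u to v uses only special arcs from A(T). -/

import Mathlib

namespace NearlyConservativePaper

variable {V : Type} [Fintype V] [DecidableEq V]

/-- A weighted digraph given by adjacency and arc weights. -/
structure WDigraph (V : Type) where
  Adj : V → V → Prop
  c : V → V → ℝ

/-- A step `(u, v, b)` of a walk: `b = false` means an original arc from `u` to `v`,
`b = true` means the added loose arc from `u` to `v`. -/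
abbrev Step (V : Type) := V × V × Bool

/-- `IsWalk AS s t l`: `l` is a walk from `s` to `t` using arcs allowed by `AS`. -/
def IsWalk (AS : V → V → Bool → Prop) : V → V → List (Step V) → Prop
  | s, t, [] => s = t
  | s, t, (u, v, b) :: l => u = s ∧ AS u v b ∧ IsWalk AS v t l

/-- The list of head-vertices of the steps of a walk. -/
def heads (l : List (Step V)) : List V := l.map fun a => a.2.1

/-- Total weight of a walk with respect to the step-weight `w`. -/
def wSum (w : V → V → Bool → ℝ) (l : List (Step V)) : ℝ :=
  (l.map fun a => w a.1 a.2.1 a.2.2).sum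

/-- A directed cycle: a nonempty closed walk whose vertices are pairwise distinct. -/
def IsCycle (AS : V → V → Bool → Prop) (s : V) (l : List (Step V)) : Prop :=
  IsWalk AS s s l ∧ l ≠ [] ∧ (heads l).Nodup

/-- A directed (simple) path. -/
def IsPath (AS : V → V → Bool → Prop) (s t : V) (l : List (Step V)) : Prop :=
  IsWalk AS s t l ∧ (s :: heads l).Nodup

/-- Nearly conservative: every negative directed cycle consists of exactly two arcs. -/
def NearlyCons (AS : V → V → Bool → Prop) (w : V → V → Bool → ℝ) : Prop :=
  ∀ s l, IsCycle AS s l → wSum w l < 0 → l.length = 2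

/-- Minimum weight of a directed path from `s` to `t`, `+∞` if there is none. -/
noncomputable def distW (AS : V → V → Bool → Prop) (w : V → V → Bool → ℝ)
    (s t : V) : EReal :=
  sInf {x : EReal | ∃ l, IsPath AS s t l ∧ (wSum w l : EReal) = x}

namespace WDigraph

variable (D : WDigraph V)

/-- The arc `uv` is special if `vu` is also an arc and `c(uv) + c(vu) < 0`. -/
def Special (u v : V) : Prop := D.Adj u v ∧ D.Adj v u ∧ D.c u v + D.c v u < 0

/-- The arcs of the original digraph `D` (only `b = false` steps). -/
def baseArcs (u v : V) (b : Bool) : Prop := b = false ∧ D.Adj u v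

/-- The arcs of the improved digraph: original arcs and, for every special arc `vu`,
an added loose ordinary arc from `u` to `v`. -/
def ImpArc (u v : V) (b : Bool) : Prop := if b then D.Special v u else D.Adj u v

/-- The weight of a step of the improved digraph: the loose arc added for the
special arc `vu` has weight `-c(vu)`. -/
def impW (u v : V) (b : Bool) : ℝ := if b then -(D.c v u) else D.c u v

/-- A walk is special-simple if it contains every special arc at most once and never
contains both a special arc and its opposite. -/
def SpecialSimple (l : List (Step V)) : Prop :=
  ∀ u v, D.Special u v → l.count (u, v, false) + l.count (v, u, false) ≤ 1

/-- The associated undirected graph `F`. -/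
def F : SimpleGraph V where
  Adj u v := u ≠ v ∧ D.Special u v
  symm := by
    constructor
    rintro u v ⟨hne, h1, h2, h3⟩
    exact ⟨hne.symm, h2, h1, by linarith⟩
  loopless := by constructor; rintro u ⟨hne, -⟩; exact hne rfl

/-- The weight of a walk of `F`, each edge being traversed as the special arc pointing
in the direction of the traversal. -/
def fWeight {s t : V} (p : D.F.Walk s t) : ℝ :=
  (p.darts.map fun d => D.c d.toProd.1 d.toProd.2).sum

/-- The improved digraph with the original (special) arcs in `Rem` removed. -/
def arcsMinus (Rem : V → V → Prop) (u v : V) (b : Bool) : Prop :=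
  D.ImpArc u v b ∧ ¬ (b = false ∧ Rem u v)

end WDigraph

/-- The special arcs of the negative tree containing `t₀` (to be removed from `D`). -/
def remT (D : WDigraph V) (t₀ : V) : V → V → Prop :=
  fun x y => D.F.Adj x y ∧ D.F.Reachable t₀ x


section Helpers
set_option linter.unusedSectionVars false
variable {AS : V → V → Bool → Prop}

-- helpers
@[simp] lemma heads_nil : heads ([] : List (Step V)) = [] := rfl
@[simp] lemma heads_cons (a : Step V) (l : List (Step V)) :
    heads (a :: l) = a.2.1 :: heads l := rfl
@[simp] lemma heads_append (l₁ l₂ : List (Step V)) :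
    heads (l₁ ++ l₂) = heads l₁ ++ heads l₂ := List.map_append

@[simp] lemma wSum_nil (w : V → V → Bool → ℝ) : wSum w ([] : List (Step V)) = 0 := rfl
@[simp] lemma wSum_cons (w : V → V → Bool → ℝ) (a : Step V) (l : List (Step V)) :
    wSum w (a :: l) = w a.1 a.2.1 a.2.2 + wSum w l := by simp [wSum]
@[simp] lemma wSum_append (w : V → V → Bool → ℝ) (l₁ l₂ : List (Step V)) :
    wSum w (l₁ ++ l₂) = wSum w l₁ + wSum w l₂ := by simp [wSum]

variable {AS : V → V → Bool → Prop}

lemma IsWalk.append {s m t : V} {l₁ l₂ : List (Step V)}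
    (h₁ : IsWalk AS s m l₁) (h₂ : IsWalk AS m t l₂) : IsWalk AS s t (l₁ ++ l₂) := by
  induction l₁ generalizing s with
  | nil => cases h₁; simpa using h₂
  | cons a l ih =>
    obtain ⟨x, y, b⟩ := a
    obtain ⟨rfl, hAS, hw⟩ := h₁
    exact ⟨rfl, hAS, ih hw⟩

lemma walk_split_cons {s t x y : V} {b : Bool} {l₁ l₂ : List (Step V)}
    (h : IsWalk AS s t (l₁ ++ (x, y, b) :: l₂)) :
    IsWalk AS s x l₁ ∧ AS x y b ∧ IsWalk AS y t l₂ := by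
  induction l₁ generalizing s with
  | nil =>
    obtain ⟨rfl, hAS, hw⟩ := h
    exact ⟨rfl, hAS, hw⟩
  | cons a l ih =>
    obtain ⟨u, v, b'⟩ := a
    obtain ⟨rfl, hAS, hw⟩ := h
    obtain ⟨h1, h2, h3⟩ := ih hw
    exact ⟨⟨rfl, hAS, h1⟩, h2, h3⟩

lemma end_mem {s t : V} {l : List (Step V)} (h : IsWalk AS s t l) (hne : l ≠ []) :
    t ∈ heads l := by
  induction l generalizing s with
  | nil => exact absurd rfl hne
  | cons a l ih =>
    obtain ⟨x, y, b⟩ := a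
    obtain ⟨rfl, hAS, hw⟩ := h
    rcases eq_or_ne l [] with rfl | hl
    · cases hw; simp
    · exact List.mem_cons_of_mem _ (ih hw hl)

lemma end_mem' {s t : V} {l : List (Step V)} (h : IsWalk AS s t l) :
    t ∈ s :: heads l := by
  rcases eq_or_ne l [] with rfl | hl
  · cases h; simp
  · exact List.mem_cons_of_mem _ (end_mem h hl)

lemma tail_mem {s t x y : V} {b : Bool} {l : List (Step V)}
    (h : IsWalk AS s t l) (hm : (x, y, b) ∈ l) :
    x ∈ s :: heads l ∧ y ∈ heads l := by
  induction l generalizing s with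
  | nil => simp at hm
  | cons a l ih =>
    obtain ⟨u, v, b'⟩ := a
    obtain ⟨rfl, hAS, hw⟩ := h
    rcases List.mem_cons.1 hm with he | hm'
    · obtain ⟨rfl, rfl, rfl⟩ := Prod.mk.injEq .. ▸ (by exact ⟨congrArg Prod.fst he, congrArg (fun p => p.2.1) he, congrArg (fun p => p.2.2) he⟩ : x = u ∧ y = v ∧ b = b')
      exact ⟨by simp, by simp⟩
    · obtain ⟨h1, h2⟩ := ih hw hm'
      exact ⟨List.mem_cons_of_mem _ h1, List.mem_cons_of_mem _ h2⟩

lemma step_idx {s t x y : V} {b : Bool} {l : List (Step V)}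
    (h : IsWalk AS s t l) (hnd : (s :: heads l).Nodup) (hm : (x, y, b) ∈ l) :
    (s :: heads l).idxOf y = (s :: heads l).idxOf x + 1 := by
  induction l generalizing s with
  | nil => simp at hm
  | cons a l ih =>
    obtain ⟨u, v, b'⟩ := a
    obtain ⟨rfl, hAS, hw⟩ := h
    simp only [heads_cons] at hnd ⊢
    have hsn : u ∉ (v :: heads l) := (List.nodup_cons.1 hnd).1
    rcases List.mem_cons.1 hm with he | hm'
    · have hx : x = u := congrArg Prod.fst he
      have hy : y = v := congrArg (fun p => p.2.1) he
      subst hx; subst hy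
      have hvy : x ≠ y := fun hh => hsn (hh ▸ List.mem_cons_self)
      rw [List.idxOf_cons_self, List.idxOf_cons_ne _ hvy, List.idxOf_cons_self]
    · have hnd' : (v :: heads l).Nodup := (List.nodup_cons.1 hnd).2
      have hidx := ih hw hnd' hm'
      obtain ⟨hxm, hym⟩ := tail_mem hw hm'
      have hxu : u ≠ x := fun hh => hsn (hh ▸ hxm)
      have hyu : u ≠ y := fun hh => hsn (hh ▸ List.mem_cons_of_mem _ hym)
      rw [List.idxOf_cons_ne _ hyu, List.idxOf_cons_ne _ hxu, hidx]

lemma no_pair {s t x y : V} {b b' : Bool} {l : List (Step V)}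
    (h : IsWalk AS s t l) (hnd : (s :: heads l).Nodup)
    (h1 : (x, y, b) ∈ l) (h2 : (y, x, b') ∈ l) : False := by
  have e1 := step_idx h hnd h1
  have e2 := step_idx h hnd h2
  omega

lemma closed_nil {s : V} {l : List (Step V)}
    (h : IsWalk AS s s l) (hnd : (s :: heads l).Nodup) : l = [] := by
  rcases eq_or_ne l [] with rfl | hl
  · rfl
  · exact absurd (end_mem h hl) (List.nodup_cons.1 hnd).1


lemma split_first {s t x : V} {l : List (Step V)}
    (h : IsWalk AS s t l) (hx : x ∈ heads l) :
    ∃ l₁ l₂, l = l₁ ++ l₂ ∧ IsWalk AS s x l₁ ∧ IsWalk AS x t l₂ ∧ l₁ ≠ [] ∧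
      (heads l₁).count x = 1 := by
  induction l generalizing s with
  | nil => simp [heads] at hx
  | cons a l ih =>
    obtain ⟨u, v, b⟩ := a
    obtain ⟨rfl, hAS, hw⟩ := h
    rcases eq_or_ne v x with rfl | hvx
    · exact ⟨[(u, v, b)], l, rfl, ⟨rfl, hAS, rfl⟩, hw, by simp, by simp [heads]⟩
    · have hx' : x ∈ heads l := by
        rcases List.mem_cons.1 hx with h' | h'
        · exact absurd h'.symm hvx
        · exact h'
      obtain ⟨l₁, l₂, rfl, hw1, hw2, hne, hc⟩ := ih hw hx'
      refine ⟨(u, v, b) :: l₁, l₂, rfl, ⟨rfl, hAS, hw1⟩, hw2, by simp, ?_⟩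
      simp only [heads_cons, List.count_cons]
      simp [beq_iff_eq, hvx, hc]

lemma split_mem {s t x : V} {l : List (Step V)}
    (h : IsWalk AS s t l) (hx : x ∈ heads l) :
    ∃ l₁ l₂, l = l₁ ++ l₂ ∧ IsWalk AS s x l₁ ∧ IsWalk AS x t l₂ ∧ l₁ ≠ [] := by
  obtain ⟨l₁, l₂, h1, h2, h3, h4, _⟩ := split_first h hx
  exact ⟨l₁, l₂, h1, h2, h3, h4⟩

lemma neg_cycle_extract (w : V → V → Bool → ℝ) :
    ∀ (n : ℕ) (l : List (Step V)) (s : V), l.length ≤ n → IsWalk AS s s l →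
      wSum w l < 0 →
      ∃ s' m, IsCycle AS s' m ∧ wSum w m < 0 ∧ ∀ a ∈ m, a ∈ l := by
  intro n
  induction n with
  | zero =>
    intro l s hlen hw hneg
    interval_cases hl : l.length
    · rw [List.length_eq_zero_iff] at hl; subst hl; simp at hneg
  | succ n ih =>
    intro l s hlen hw hneg
    have hlne : l ≠ [] := by rintro rfl; simp at hneg
    by_cases hnd : (heads l).Nodup
    · exact ⟨s, l, ⟨hw, hlne, hnd⟩, hneg, fun a ha => ha⟩
    · rw [List.nodup_iff_count_le_one] at hnd
      push_neg at hnd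
      obtain ⟨x, hx2⟩ := hnd
      have hxmem : x ∈ heads l := by
        by_contra hxm
        rw [List.count_eq_zero_of_not_mem hxm] at hx2; omega
      obtain ⟨l₁, l₂, rfl, hw1, hw2, hne1, hc1⟩ := split_first hw hxmem
      have hxmem2 : x ∈ heads l₂ := by
        rw [heads_append, List.count_append] at hx2
        rw [← List.count_pos_iff]
        omega
      obtain ⟨m₁, m₂, rfl, hwm1, hwm2, hnem1⟩ := split_mem hw2 hxmem2
      have hsum : wSum w l₁ + (wSum w m₁ + wSum w m₂) < 0 := by
        simpa using hneg
      have hlen1 : l₁.length + (m₁.length + m₂.length) ≤ n + 1 := by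
        simpa using hlen
      have hm1pos : 0 < m₁.length := List.length_pos_iff.2 hnem1
      have hl1pos : 0 < l₁.length := List.length_pos_iff.2 hne1
      by_cases hm1 : wSum w m₁ < 0
      · obtain ⟨s', m, hc, hneg', hsub⟩ := ih m₁ x (by omega) hwm1 hm1
        exact ⟨s', m, hc, hneg', fun a ha => by
          have := hsub a ha; simp at this ⊢; tauto⟩
      · have : wSum w (l₁ ++ m₂) < 0 := by
          rw [wSum_append]; push_neg at hm1; linarith
        obtain ⟨s', m, hc, hneg', hsub⟩ := ih (l₁ ++ m₂) s
          (by simpa using by omega : (l₁ ++ m₂).length ≤ n)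
          (hw1.append hwm2) this
        exact ⟨s', m, hc, hneg', fun a ha => by
          have := hsub a ha; simp at this ⊢; tauto⟩


/-- A step is *good* if it is an original special arc of the negative tree containing `t₀`. -/
def Good (D : WDigraph V) (t₀ : V) (a : Step V) : Prop :=
  a.2.2 = false ∧ D.F.Adj a.1 a.2.1 ∧ D.F.Reachable t₀ a.1

variable {D : WDigraph V} {t₀ : V}

lemma Special.symm {x y : V} (h : D.Special x y) : D.Special y x :=
  ⟨h.2.1, h.1, by linarith [h.2.2]⟩

lemma F_adj_iff {x y : V} : D.F.Adj x y ↔ x ≠ y ∧ D.Special x y := Iff.rfl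

@[simp] lemma impArc_false {x y : V} : D.ImpArc x y false ↔ D.Adj x y := by
  simp [WDigraph.ImpArc]

@[simp] lemma impArc_true {x y : V} : D.ImpArc x y true ↔ D.Special y x := by
  simp [WDigraph.ImpArc]

@[simp] lemma impW_false {x y : V} : D.impW x y false = D.c x y := by simp [WDigraph.impW]

@[simp] lemma impW_true {x y : V} : D.impW x y true = -(D.c y x) := by simp [WDigraph.impW]

lemma Good.impArc {a : Step V} (h : Good D t₀ a) : D.ImpArc a.1 a.2.1 a.2.2 := by
  rw [h.1]; exact impArc_false.2 h.2.1.2.1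

/-- Reversal of a list of special tree arcs. -/
def revSteps (l : List (Step V)) : List (Step V) :=
  l.reverse.map fun a => (a.2.1, a.1, false)

@[simp] lemma revSteps_nil : revSteps ([] : List (Step V)) = [] := rfl

lemma revSteps_cons (a : Step V) (l : List (Step V)) :
    revSteps (a :: l) = revSteps l ++ [(a.2.1, a.1, false)] := by
  simp [revSteps]

lemma revSteps_mem {x y : V} {b : Bool} {l : List (Step V)}
    (hg : ∀ a ∈ l, Good D t₀ a) (h : (x, y, b) ∈ revSteps l) :
    (y, x, false) ∈ l := by
  simp only [revSteps, List.mem_map, List.mem_reverse] at h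
  obtain ⟨a, ha, he⟩ := h
  obtain ⟨a1, a2, ab⟩ := a
  have h1 : a2 = x := congrArg Prod.fst he
  have h2 : a1 = y := congrArg (fun p => p.2.1) he
  have h3 : ab = false := (hg _ ha).1
  subst h1; subst h2; subst h3; exact ha

lemma revSteps_walk {u v : V} {l : List (Step V)}
    (hw : IsWalk D.ImpArc u v l) (hg : ∀ a ∈ l, Good D t₀ a) :
    IsWalk D.ImpArc v u (revSteps l) := by
  induction l generalizing u with
  | nil => cases hw; simp [IsWalk]
  | cons a l ih =>
    obtain ⟨a1, a2, ab⟩ := a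
    obtain ⟨rfl, hAS, hwl⟩ := hw
    rw [revSteps_cons]
    refine (ih hwl (fun a ha => hg a (List.mem_cons_of_mem _ ha))).append ?_
    have hadj : D.Adj a2 a1 := (hg _ (List.mem_cons_self)).2.1.2.2.1
    exact ⟨rfl, impArc_false.2 hadj, rfl⟩

lemma sigma_nonpos {l : List (Step V)} (hg : ∀ a ∈ l, Good D t₀ a) :
    wSum D.impW l + wSum D.impW (revSteps l) ≤ 0 ∧
      (l ≠ [] → wSum D.impW l + wSum D.impW (revSteps l) < 0) := by
  induction l with
  | nil => simp
  | cons a l ih =>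
    obtain ⟨hih, _⟩ := ih (fun a ha => hg a (List.mem_cons_of_mem _ ha))
    obtain ⟨a1, a2, ab⟩ := a
    have hgd := hg _ (List.mem_cons_self)
    have hab : ab = false := hgd.1
    subst hab
    have hsp : D.Special a1 a2 := hgd.2.1.2
    have hlt : D.c a1 a2 + D.c a2 a1 < 0 := hsp.2.2
    rw [revSteps_cons]
    simp only [wSum_cons, wSum_append]
    constructor
    · simp only [wSum_cons, wSum_nil, impW_false]
      linarith
    · intro _
      simp only [wSum_cons, wSum_nil, impW_false]
      linarith

/-- Steps of a walk in the associated undirected graph `F`, oriented forwards. -/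
def Fsteps {u v : V} (W : D.F.Walk u v) : List (Step V) :=
  W.darts.map fun d => (d.toProd.1, d.toProd.2, false)

@[simp] lemma Fsteps_nil {u : V} : Fsteps (SimpleGraph.Walk.nil : D.F.Walk u u) = [] := rfl

lemma Fsteps_cons {u x v : V} (h : D.F.Adj u x) (W : D.F.Walk x v) :
    Fsteps (SimpleGraph.Walk.cons h W) = (u, x, false) :: Fsteps W := rfl

lemma Fsteps_walk {u v : V} (W : D.F.Walk u v) : IsWalk D.ImpArc u v (Fsteps W) := by
  induction W with
  | nil => rfl
  | cons h p ih => exact ⟨rfl, impArc_false.2 h.2.1, ih⟩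

lemma Fsteps_heads {u v : V} (W : D.F.Walk u v) : heads (Fsteps W) = W.support.tail := by
  induction W with
  | nil => rfl
  | cons h p ih =>
    rename_i a b c
    rw [Fsteps_cons, heads_cons, ih, SimpleGraph.Walk.support_cons]
    simp only [List.tail_cons]
    exact (SimpleGraph.Walk.support_eq_cons p).symm ▸ rfl

lemma support_reachable {u v : V} (W : D.F.Walk u v) (hu : D.F.Reachable t₀ u) :
    ∀ x ∈ W.support, D.F.Reachable t₀ x := by
  induction W with
  | nil => intro x hx; simp at hx; subst hx; exact hu
  | cons h p ih =>
    intro x hx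
    rw [SimpleGraph.Walk.support_cons] at hx
    rcases List.mem_cons.1 hx with rfl | hx'
    · exact hu
    · exact ih (hu.trans h.reachable) x hx'

lemma Fsteps_good {u v : V} (W : D.F.Walk u v) (hu : D.F.Reachable t₀ u) :
    ∀ a ∈ Fsteps W, Good D t₀ a := by
  intro a ha
  simp only [Fsteps, List.mem_map] at ha
  obtain ⟨d, hd, rfl⟩ := ha
  exact ⟨rfl, d.adj, support_reachable W hu _ (W.dart_fst_mem_support_of_mem_darts hd)⟩

/-- Shape of a negative cycle in a nearly conservative improved digraph. -/
lemma neg_cycle_shape (hnc : NearlyCons D.ImpArc D.impW) {s' : V} {m : List (Step V)}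
    (hc : IsCycle D.ImpArc s' m) (hneg : wSum D.impW m < 0) :
    ∃ y, m = [(s', y, false), (y, s', false)] ∧ D.Special s' y := by
  have hlen : m.length = 2 := hnc s' m hc hneg
  obtain ⟨a₁, a₂, rfl⟩ := List.length_eq_two.1 hlen
  obtain ⟨x1, y1, b1⟩ := a₁
  obtain ⟨x2, y2, b2⟩ := a₂
  obtain ⟨hw, -, -⟩ := hc
  obtain ⟨h1, hA1, h2, hA2, h3⟩ := hw
  have h3' : y2 = s' := h3
  subst_vars
  refine ⟨x2, ?_⟩
  have hsum : D.impW y2 x2 b1 + D.impW x2 y2 b2 < 0 := by simpa using hneg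
  cases b1 <;> cases b2 <;>
    simp only [impW_false, impW_true, impArc_false, impArc_true] at hsum hA1 hA2
  · exact ⟨rfl, hA1, hA2, hsum⟩
  · linarith
  · linarith
  · linarith [hA1.2.2]


lemma list_sum_nonneg {α : Type*} (l : List α) (f : α → ℝ) (h : ∀ x ∈ l, 0 ≤ f x) :
    0 ≤ (l.map f).sum := by
  induction l with
  | nil => simp
  | cons a l ih =>
    simp only [List.map_cons, List.sum_cons]
    have := h a (List.mem_cons_self)
    have := ih fun x hx => h x (List.mem_cons_of_mem _ hx)
    linarith

lemma list_sum_nonpos {α : Type*} (l : List α) (f : α → ℝ) (h : ∀ x ∈ l, f x ≤ 0) :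
    (l.map f).sum ≤ 0 := by
  induction l with
  | nil => simp
  | cons a l ih =>
    simp only [List.map_cons, List.sum_cons]
    have := h a (List.mem_cons_self)
    have := ih fun x hx => h x (List.mem_cons_of_mem _ hx)
    linarith

lemma list_sum_neg {α : Type*} (l : List α) (f : α → ℝ) (h : ∀ x ∈ l, f x ≤ 0)
    {x₀ : α} (hx₀ : x₀ ∈ l) (hneg : f x₀ < 0) : (l.map f).sum < 0 := by
  induction l with
  | nil => simp at hx₀
  | cons a l ih =>
    simp only [List.map_cons, List.sum_cons]
    have ha := h a (List.mem_cons_self)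
    have hle : (l.map f).sum ≤ 0 :=
      list_sum_nonpos l f fun x hx => h x (List.mem_cons_of_mem _ hx)
    rcases List.mem_cons.1 hx₀ with rfl | hx'
    · linarith
    · have := ih (fun x hx => h x (List.mem_cons_of_mem _ hx)) hx'
      linarith

lemma list_sum_add {α : Type*} (l : List α) (f g : α → ℝ) :
    (l.map fun x => f x + g x).sum = (l.map f).sum + (l.map g).sum := by
  induction l with
  | nil => simp
  | cons a l ih => simp [ih]; ring

/-- The main recursion: a family of segments, each consisting of a piece `p` of a simple
path and a parallel path `q` of good (negative-tree) arcs, with total `p`-weight at most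
total `q`-weight, has all its `p`-arcs good. -/
lemma main_recursion (D : WDigraph V) (t₀ : V) (hnc : NearlyCons D.ImpArc D.impW) :
    ∀ (n : ℕ) (S : List (V × V × List (Step V) × List (Step V))),
      (S.map fun seg => seg.2.2.2.length).sum ≤ n →
      (∀ seg ∈ S,
        IsWalk D.ImpArc seg.1 seg.2.1 seg.2.2.1 ∧ (seg.1 :: heads seg.2.2.1).Nodup ∧
        IsWalk D.ImpArc seg.1 seg.2.1 seg.2.2.2 ∧ (seg.1 :: heads seg.2.2.2).Nodup ∧
        ∀ a ∈ seg.2.2.2, Good D t₀ a) →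
      (S.map fun seg => wSum D.impW seg.2.2.1).sum ≤
        (S.map fun seg => wSum D.impW seg.2.2.2).sum →
      ∀ a : Step V, (∃ seg ∈ S, a ∈ seg.2.2.1) → Good D t₀ a := by
  intro n
  induction n with
  | zero =>
    intro S hlen hinv _ a ⟨seg, hseg, hap⟩
    have hq : seg.2.2.2 = [] := by
      have h0 : (S.map fun seg => seg.2.2.2.length).sum = 0 := Nat.le_zero.1 hlen
      have := (List.sum_eq_zero_iff.1 h0) seg.2.2.2.length
        (List.mem_map.2 ⟨seg, hseg, rfl⟩)
      exact List.length_eq_zero_iff.1 this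
    obtain ⟨hwp, hndp, hwq, -, -⟩ := hinv seg hseg
    rw [hq] at hwq
    have hab : seg.1 = seg.2.1 := hwq
    rw [← hab] at hwp
    rw [closed_nil hwp hndp] at hap
    simp at hap
  | succ n ih =>
    intro S hlen hinv hsum a ha
    by_cases hq : ∀ seg ∈ S, seg.2.2.2 = []
    · obtain ⟨seg, hseg, hap⟩ := ha
      obtain ⟨hwp, hndp, hwq, -, -⟩ := hinv seg hseg
      rw [hq seg hseg] at hwq
      have hab : seg.1 = seg.2.1 := hwq
      rw [← hab] at hwp
      rw [closed_nil hwp hndp] at hap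
      simp at hap
    · push_neg at hq
      obtain ⟨segx, hsegx, hqx⟩ := hq
      have hexists : ∃ seg ∈ S,
          wSum D.impW seg.2.2.1 + wSum D.impW (revSteps seg.2.2.2) < 0 := by
        by_contra hno
        push_neg at hno
        have h1 : 0 ≤ (S.map fun seg =>
            wSum D.impW seg.2.2.1 + wSum D.impW (revSteps seg.2.2.2)).sum :=
          list_sum_nonneg _ _ hno
        rw [list_sum_add] at h1
        have h2 : (S.map fun seg =>
            wSum D.impW seg.2.2.2 + wSum D.impW (revSteps seg.2.2.2)).sum < 0 :=
          list_sum_neg _ _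
            (fun seg hs => (sigma_nonpos (hinv seg hs).2.2.2.2).1)
            hsegx ((sigma_nonpos (hinv segx hsegx).2.2.2.2).2 hqx)
        rw [list_sum_add] at h2
        linarith
      obtain ⟨seg₀, hseg₀, hneg₀⟩ := hexists
      obtain ⟨a₀, b₀, p₀, q₀⟩ := seg₀
      obtain ⟨hwp, hndp, hwq, hndq, hgq⟩ := hinv _ hseg₀
      have hC : IsWalk D.ImpArc a₀ a₀ (p₀ ++ revSteps q₀) :=
        hwp.append (revSteps_walk hwq hgq)
      have hCneg : wSum D.impW (p₀ ++ revSteps q₀) < 0 := by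
        rw [wSum_append]; exact hneg₀
      obtain ⟨s', m, hcyc, hmneg, hsub⟩ :=
        neg_cycle_extract D.impW _ _ _ le_rfl hC hCneg
      obtain ⟨y, rfl, hsp⟩ := neg_cycle_shape hnc hcyc hmneg
      have hm1 := hsub (s', y, false) (by simp)
      have hm2 := hsub (y, s', false) (by simp)
      have hcommon : ∃ z w : V, (z, w, false) ∈ p₀ ∧ (z, w, false) ∈ q₀ := by
        rcases List.mem_append.1 hm1 with h1 | h1 <;>
          rcases List.mem_append.1 hm2 with h2 | h2
        · exact (no_pair hwp hndp h1 h2).elim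
        · exact ⟨s', y, h1, revSteps_mem hgq h2⟩
        · exact ⟨y, s', h2, revSteps_mem hgq h1⟩
        · exact (no_pair hwq hndq (revSteps_mem hgq h2) (revSteps_mem hgq h1)).elim
      obtain ⟨z, w, hzp, hzq⟩ := hcommon
      have hgoodzw : Good D t₀ (z, w, false) := hgq _ hzq
      obtain ⟨pa, pb, rfl⟩ := List.append_of_mem hzp
      obtain ⟨qa, qb, rfl⟩ := List.append_of_mem hzq
      obtain ⟨hwpa, -, hwpb⟩ := walk_split_cons hwp
      obtain ⟨hwqa, -, hwqb⟩ := walk_split_cons hwq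
      obtain ⟨S₁, S₂, rfl⟩ := List.append_of_mem hseg₀
      -- nodup facts for the pieces
      have hhp : heads (pa ++ (z, w, false) :: pb) = heads pa ++ w :: heads pb := by simp
      have hhq : heads (qa ++ (z, w, false) :: qb) = heads qa ++ w :: heads qb := by simp
      rw [hhp] at hndp
      rw [hhq] at hndq
      have hndpa : (a₀ :: heads pa).Nodup :=
        (((List.sublist_append_left _ _).cons₂ a₀).nodup hndp)
      have hndpb : (w :: heads pb).Nodup :=
        (((List.sublist_append_right _ _).trans (List.sublist_cons_self _ _)).nodup hndp)
      have hndqa : (a₀ :: heads qa).Nodup :=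
        (((List.sublist_append_left _ _).cons₂ a₀).nodup hndq)
      have hndqb : (w :: heads qb).Nodup :=
        (((List.sublist_append_right _ _).trans (List.sublist_cons_self _ _)).nodup hndq)
      -- the refined family
      set S' : List (V × V × List (Step V) × List (Step V)) :=
        S₁ ++ (a₀, z, pa, qa) :: (w, b₀, pb, qb) :: S₂ with hS'
      have hlen' : (S'.map fun seg => seg.2.2.2.length).sum ≤ n := by
        simp only [hS', List.map_append, List.map_cons, List.sum_append, List.sum_cons] at hlen ⊢
        simp only [List.length_append, List.length_cons] at hlen
        omega
      have hinv' : ∀ seg ∈ S',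
          IsWalk D.ImpArc seg.1 seg.2.1 seg.2.2.1 ∧ (seg.1 :: heads seg.2.2.1).Nodup ∧
          IsWalk D.ImpArc seg.1 seg.2.1 seg.2.2.2 ∧ (seg.1 :: heads seg.2.2.2).Nodup ∧
          ∀ a ∈ seg.2.2.2, Good D t₀ a := by
        intro seg hs
        rw [hS'] at hs
        rcases List.mem_append.1 hs with h | h
        · exact hinv seg (List.mem_append_left _ h)
        · rcases List.mem_cons.1 h with rfl | h
          · exact ⟨hwpa, hndpa, hwqa, hndqa,
              fun a ha => hgq a (List.mem_append_left _ ha)⟩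
          · rcases List.mem_cons.1 h with rfl | h
            · exact ⟨hwpb, hndpb, hwqb, hndqb,
                fun a ha => hgq a (List.mem_append_right _ (List.mem_cons_of_mem _ ha))⟩
            · exact hinv seg (List.mem_append_right _ (List.mem_cons_of_mem _ h))
      have hsum' : (S'.map fun seg => wSum D.impW seg.2.2.1).sum ≤
          (S'.map fun seg => wSum D.impW seg.2.2.2).sum := by
        simp only [hS', List.map_append, List.map_cons, List.sum_append, List.sum_cons,
          wSum_append, wSum_cons] at hsum ⊢
        linarith
      obtain ⟨seg, hsegmem, hap⟩ := ha
      rcases List.mem_append.1 hsegmem with h | h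
      · refine ih S' hlen' hinv' hsum' a ⟨seg, ?_, hap⟩
        rw [hS']; exact List.mem_append_left _ h
      · rcases List.mem_cons.1 h with rfl | h
        · rcases List.mem_append.1 hap with h' | h'
          · refine ih S' hlen' hinv' hsum' a ⟨(a₀, z, pa, qa), ?_, h'⟩
            rw [hS']; simp
          · rcases List.mem_cons.1 h' with rfl | h'
            · exact hgoodzw
            · refine ih S' hlen' hinv' hsum' a ⟨(w, b₀, pb, qb), ?_, h'⟩
              rw [hS']; simp
        · refine ih S' hlen' hinv' hsum' a ⟨seg, ?_, hap⟩
          rw [hS']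
          exact List.mem_append_right _
            (List.mem_cons_of_mem _ (List.mem_cons_of_mem _ h))


end Helpers

/-- Let `T` be the negative tree of the forest `F` containing `t₀`, and assume
`c` is nearly conservative on the improved digraph `D`.  If `P = P1 ++ P2 ++ P3` is a
minimum-weight path from `s` to `t`, `u` is the first vertex of `P` lying in `V(T)` and `v`
is the last vertex of `P` lying in `V(T)`, then the part `P2` of `P` from `u` to `v` uses
only special arcs from `A(T)`. -/
theorem statement_2 {V : Type} [Fintype V] [DecidableEq V] (D : WDigraph V)
    (hloop : ∀ v, ¬ D.Adj v v) (hforest : D.F.IsAcyclic)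
    (hnc : NearlyCons D.ImpArc D.impW)
    (t₀ : V) (hT : ∃ y, D.F.Adj t₀ y)
    (s t u v : V) (P1 P2 P3 : List (Step V))
    (hpath : IsPath D.ImpArc s t (P1 ++ P2 ++ P3))
    (hmin : ∀ P', IsPath D.ImpArc s t P' →
      wSum D.impW (P1 ++ P2 ++ P3) ≤ wSum D.impW P')
    (h1 : IsWalk D.ImpArc s u P1) (h2 : IsWalk D.ImpArc u v P2)
    (h3 : IsWalk D.ImpArc v t P3)
    (hu : D.F.Reachable t₀ u) (hv : D.F.Reachable t₀ v)
    (hfirst : ∀ x ∈ s :: heads P1, D.F.Reachable t₀ x → x = u)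
    (hlast : ∀ x ∈ v :: heads P3, D.F.Reachable t₀ x → x = v) :
    ∀ a ∈ P2, a.2.2 = false ∧ D.F.Adj a.1 a.2.1 ∧ D.F.Reachable t₀ a.1 := by
  classical
  -- an `F`-path from `u` to `v` inside the negative tree containing `t₀`
  obtain ⟨W₀⟩ := hu.symm.trans hv
  set W : D.F.Walk u v := W₀.toPath.1 with hWdef
  have hWp : W.IsPath := W₀.toPath.2
  set q : List (Step V) := Fsteps W with hqdef
  have hqwalk : IsWalk D.ImpArc u v q := Fsteps_walk W
  have hqgood : ∀ a ∈ q, Good D t₀ a := Fsteps_good W hu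
  have hqsupp : u :: heads q = W.support := by
    rw [hqdef, Fsteps_heads]
    exact (SimpleGraph.Walk.support_eq_cons W).symm
  have hndq : (u :: heads q).Nodup := by rw [hqsupp]; exact hWp.support_nodup
  -- decompose the nodup hypothesis on P
  have hnd0 : ((s :: heads P1) ++ (heads P2 ++ heads P3)).Nodup := by
    have := hpath.2
    simpa only [heads_append, List.cons_append, List.append_assoc] using this
  rw [List.nodup_append] at hnd0
  obtain ⟨hA, hBC, hABC⟩ := hnd0
  rw [List.nodup_append] at hBC
  obtain ⟨hB, hC, hBCd⟩ := hBC
  have hAB : ∀ x ∈ s :: heads P1, x ∉ heads P2 := fun x hx hx' =>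
    hABC x hx x (List.mem_append_left _ hx') rfl
  have hAC : ∀ x ∈ s :: heads P1, x ∉ heads P3 := fun x hx hx' =>
    hABC x hx x (List.mem_append_right _ hx') rfl
  have huA : u ∈ s :: heads P1 := end_mem' h1
  have hvuB : v ∈ u :: heads P2 := end_mem' h2
  have hvC : v ∉ heads P3 := by
    rcases List.mem_cons.1 hvuB with rfl | hvB
    · exact hAC _ huA
    · exact fun h => hBCd v hvB v h rfl
  have hndP2 : (u :: heads P2).Nodup := List.nodup_cons.2 ⟨hAB u huA, hB⟩
  -- the swap path P1 ++ q ++ P3 is a path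
  have hnewwalk : IsWalk D.ImpArc s t (P1 ++ q ++ P3) :=
    (h1.append hqwalk).append h3
  have hKsub : ∀ x ∈ heads q, D.F.Reachable t₀ x := by
    intro x hx
    exact support_reachable W hu x (by rw [← hqsupp]; exact List.mem_cons_of_mem _ hx)
  have hKnd : (heads q).Nodup := (List.nodup_cons.1 hndq).2
  have hAK : ∀ x ∈ s :: heads P1, x ∉ heads q := by
    intro x hx hx'
    have hxu : x = u := hfirst x hx (hKsub x hx')
    subst hxu
    exact (List.nodup_cons.1 hndq).1 hx'
  have hKC : ∀ x ∈ heads q, x ∉ heads P3 := by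
    intro x hx hx'
    have hxv : x = v := hlast x (List.mem_cons_of_mem _ hx') (hKsub x hx)
    subst hxv
    exact hvC hx'
  have hnewnd : (s :: heads (P1 ++ q ++ P3)).Nodup := by
    have : ((s :: heads P1) ++ (heads q ++ heads P3)).Nodup := by
      rw [List.nodup_append]
      refine ⟨hA, ?_, ?_⟩
      · rw [List.nodup_append]
        exact ⟨hKnd, hC, fun x hx y hy hxy => hKC x hx (hxy ▸ hy)⟩
      · intro x hx y hx' hxy
        subst hxy
        rcases List.mem_append.1 hx' with h' | h'
        · exact hAK x hx h'
        · exact hAC x hx h'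
    simpa only [heads_append, List.cons_append, List.append_assoc] using this
  have hmin' := hmin (P1 ++ q ++ P3) ⟨hnewwalk, hnewnd⟩
  have hP2q : wSum D.impW P2 ≤ wSum D.impW q := by
    simp only [wSum_append] at hmin'
    linarith
  -- apply the main recursion to the single segment (u, v, P2, q)
  intro a ha
  exact main_recursion D t₀ hnc q.length [(u, v, P2, q)]
    (by simp)
    (by
      intro seg hseg
      rw [List.mem_singleton] at hseg
      subst hseg
      exact ⟨h2, hndP2, hqwalk, hndq, hqgood⟩)
    (by simpa using hP2q)
    a ⟨(u, v, P2, q), List.mem_singleton_self _, ha⟩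

end NearlyConservativePaper
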